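/- Let G_sw be a connected strength-weighted graph, {E_1, …, E_k} a c-partition of E(G), e = uv ∈ E_i, U = ℓ_i(u), V = ℓ_i(v), and E = UV the corresponding edge of the strength-weighted quotient graph G_i = G_sw/E_i. Then m_0(e|G_sw) = m_0(E|G_i), i.e. Σ_{x ∈ N_0(e|G)} s_v(x) + Σ_{f ∈ M_0(e|G)} s_e(f) = Σ_{X ∈ N_0(E|G_i)} s_v^i(X) + Σ_{F ∈ M_0(E|G_i)} s_e^i(F). -/

import Mathlib

open SimpleGraph

namespace SzegedCut

variable {V : Type*}

/-- `N_u(e|G)` for the edge `e = uv`: vertices strictly closer to `u` than to `v`. -/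
def Nset (G : SimpleGraph V) (u v : V) : Set V := {x | G.dist u x < G.dist v x}

/-- `N_0(e|G)` for the edge `e = uv`: vertices equidistant from `u` and `v`. -/
def N0set (G : SimpleGraph V) (u v : V) : Set V := {x | G.dist u x = G.dist v x}

/-- Distance from a vertex to an edge: minimum over the endpoints of the edge. -/
noncomputable def eDist (G : SimpleGraph V) (u : V) : Sym2 V → ℕ :=
  Sym2.lift ⟨fun x y => min (G.dist u x) (G.dist u y), fun x y => min_comm _ _⟩

/-- `M_u(e|G)` for the edge `e = uv`: edges strictly closer to `u` than to `v`. -/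
def Mset (G : SimpleGraph V) (u v : V) : Set (Sym2 V) :=
  {f | f ∈ G.edgeSet ∧ eDist G u f < eDist G v f}

/-- `M_0(e|G)` for the edge `e = uv`: edges equidistant from `u` and `v`. -/
def M0set (G : SimpleGraph V) (u v : V) : Set (Sym2 V) :=
  {f | f ∈ G.edgeSet ∧ eDist G u f = eDist G v f}

/-- The Djoković–Winkler relation `Θ` on the edges of `G`. -/
def Theta (G : SimpleGraph V) (e₁ e₂ : Sym2 V) : Prop :=
  e₁ ∈ G.edgeSet ∧ e₂ ∈ G.edgeSet ∧
    ∃ u₁ v₁ u₂ v₂, e₁ = s(u₁, v₁) ∧ e₂ = s(u₂, v₂) ∧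
      G.dist u₁ u₂ + G.dist v₁ v₂ ≠ G.dist u₁ v₂ + G.dist u₂ v₁

/-- `Θ*`, the transitive closure of the Djoković–Winkler relation. -/
def ThetaStar (G : SimpleGraph V) : Sym2 V → Sym2 V → Prop :=
  Relation.TransGen (Theta G)

/-- A c-partition of `E(G)`: a partition of the edge set each of whose parts is a
union of `Θ*`-classes (equivalently, is closed under `Θ*`). -/
def IsCPartition (G : SimpleGraph V) {k : ℕ} (P : Fin k → Set (Sym2 V)) : Prop :=
  (⋃ i, P i) = G.edgeSet ∧
  (∀ i j, i ≠ j → Disjoint (P i) (P j)) ∧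
  (∀ i, ∀ e ∈ P i, ∀ f, ThetaStar G e f → f ∈ P i)

/-- The connected components of `G \ F`, i.e. the vertices of the quotient graph `G/F`. -/
abbrev Comp (G : SimpleGraph V) (F : Set (Sym2 V)) := (G.deleteEdges F).ConnectedComponent

/-- `ℓ(u)`: the connected component of `G \ F` containing `u`. -/
def proj (G : SimpleGraph V) (F : Set (Sym2 V)) (u : V) : Comp G F :=
  (G.deleteEdges F).connectedComponentMk u

/-- The quotient graph `G/F`: vertices are the connected components of `G \ F`,
two components being adjacent iff some vertex of one is adjacent in `G` to a
vertex of the other. -/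
def quotGraph (G : SimpleGraph V) (F : Set (Sym2 V)) : SimpleGraph (Comp G F) where
  Adj X Y := X ≠ Y ∧ ∃ x y, G.Adj x y ∧ proj G F x = X ∧ proj G F y = Y
  symm := by
    constructor; rintro X Y ⟨hne, x, y, hadj, hx, hy⟩
    exact ⟨hne.symm, y, x, hadj.symm, hy, hx⟩
  loopless := by constructor; rintro X ⟨hne, -⟩; exact hne rfl

/-- `Ê` for a quotient edge `E`: the edges of `G` joining the two components of `E`. -/
def hatE (G : SimpleGraph V) (F : Set (Sym2 V)) (E : Sym2 (Comp G F)) : Set (Sym2 V) :=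
  {e | e ∈ G.edgeSet ∧ e.map (proj G F) = E}

/-- `E(X)` for a component `X` of `G \ F`: the edges of `G \ F` lying inside `X`. -/
def compEdges (G : SimpleGraph V) (F : Set (Sym2 V)) (X : Comp G F) : Set (Sym2 V) :=
  {f | f ∈ (G.deleteEdges F).edgeSet ∧ ∀ x ∈ f, x ∈ X.supp}

/-- Sum of a weight function over a set. -/
noncomputable def vsum {α : Type*} (s : Set α) (w : α → ℝ) : ℝ := ∑ᶠ x ∈ s, w x

/-- `n_u(e|G_sw)` for `e = uv`. -/
noncomputable def nval (G : SimpleGraph V) (wv : V → ℝ) (u v : V) : ℝ :=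
  vsum (Nset G u v) wv

/-- `n_0(e|G_sw)` for `e = uv`. -/
noncomputable def n0val (G : SimpleGraph V) (wv : V → ℝ) (u v : V) : ℝ :=
  vsum (N0set G u v) wv

/-- `m_u(e|G_sw)` for `e = uv`. -/
noncomputable def mval (G : SimpleGraph V) (sv : V → ℝ) (se : Sym2 V → ℝ) (u v : V) : ℝ :=
  vsum (Nset G u v) sv + vsum (Mset G u v) se

/-- `m_0(e|G_sw)` for `e = uv`. -/
noncomputable def m0val (G : SimpleGraph V) (sv : V → ℝ) (se : Sym2 V → ℝ) (u v : V) : ℝ :=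
  vsum (N0set G u v) sv + vsum (M0set G u v) se

lemma N0set_comm (G : SimpleGraph V) (u v : V) : N0set G u v = N0set G v u :=
  Set.ext fun _ => eq_comm

lemma M0set_comm (G : SimpleGraph V) (u v : V) : M0set G u v = M0set G v u :=
  Set.ext fun _ => and_congr_right fun _ => eq_comm

lemma n0val_comm (G : SimpleGraph V) (wv : V → ℝ) (u v : V) :
    n0val G wv u v = n0val G wv v u := by rw [n0val, n0val, N0set_comm]

lemma m0val_comm (G : SimpleGraph V) (sv : V → ℝ) (se : Sym2 V → ℝ) (u v : V) :
    m0val G sv se u v = m0val G sv se v u := by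
  rw [m0val, m0val, N0set_comm, M0set_comm]

/-- A regular function of six variables: symmetric in the first two and in the
next two coordinates. -/
def IsRegular (F : ℝ → ℝ → ℝ → ℝ → ℝ → ℝ → ℝ) : Prop :=
  ∀ a b c d x y, F a b c d x y = F b a d c x y

/-- `F(e|G_sw)` for a regular function `F`. -/
noncomputable def FEdge (G : SimpleGraph V) (wv sv : V → ℝ) (se : Sym2 V → ℝ)
    (F : ℝ → ℝ → ℝ → ℝ → ℝ → ℝ → ℝ) (hF : IsRegular F) : Sym2 V → ℝ :=
  Sym2.lift ⟨fun u v =>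
      F (nval G wv u v) (nval G wv v u) (mval G sv se u v) (mval G sv se v u)
        (n0val G wv u v) (m0val G sv se u v),
    fun u v => by dsimp only; rw [hF, n0val_comm, m0val_comm]⟩

/-- The general Szeged-like topological index `TI_F(G_sw)`. -/
noncomputable def TI (G : SimpleGraph V) (wv sv : V → ℝ) (we se : Sym2 V → ℝ)
    (F : ℝ → ℝ → ℝ → ℝ → ℝ → ℝ → ℝ) (hF : IsRegular F) : ℝ :=
  ∑ᶠ e ∈ G.edgeSet, we e * FEdge G wv sv se F hF e

/-- Vertex weight `w_v^i` of the strength-weighted quotient graph. -/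
noncomputable def qwv (G : SimpleGraph V) (F : Set (Sym2 V)) (wv : V → ℝ)
    (X : Comp G F) : ℝ :=
  vsum X.supp wv

/-- Vertex weight `s_v^i` of the strength-weighted quotient graph. -/
noncomputable def qsv (G : SimpleGraph V) (F : Set (Sym2 V)) (sv : V → ℝ)
    (se : Sym2 V → ℝ) (X : Comp G F) : ℝ :=
  vsum (compEdges G F X) se + vsum X.supp sv

/-- Edge weight `w_e^i` of the strength-weighted quotient graph. -/
noncomputable def qwe (G : SimpleGraph V) (F : Set (Sym2 V)) (we : Sym2 V → ℝ)
    (E : Sym2 (Comp G F)) : ℝ :=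
  vsum (hatE G F E) we

/-- Edge weight `s_e^i` of the strength-weighted quotient graph. -/
noncomputable def qse (G : SimpleGraph V) (F : Set (Sym2 V)) (se : Sym2 V → ℝ)
    (E : Sym2 (Comp G F)) : ℝ :=
  vsum (hatE G F E) se


section Aux

open SimpleGraph Walk
open scoped Classical

variable {G : SimpleGraph V} {F : Set (Sym2 V)}

/-- number of `F`-edges of a walk -/
noncomputable def cF (F : Set (Sym2 V)) {G : SimpleGraph V} {a b : V} (W : G.Walk a b) : ℕ :=
  (W.darts.filter (fun d => decide (d.edge ∈ F))).length

/-- the Φ-potential of a walk: signed sum over the `F`-darts of the walk of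
distance differences to `y`. -/
noncomputable def phiW (F : Set (Sym2 V)) {G : SimpleGraph V} {a b : V} (W : G.Walk a b)
    (y : V) : ℤ :=
  (W.darts.map (fun d => if d.edge ∈ F then ((G.dist d.fst y : ℤ) - G.dist d.snd y) else 0)).sum

lemma cF_nil {a : V} : cF F (Walk.nil : G.Walk a a) = 0 := rfl

lemma cF_cons {a b c : V} (h : G.Adj a b) (W : G.Walk b c) :
    cF F (Walk.cons h W) = (if s(a, b) ∈ F then 1 else 0) + cF F W := by
  simp only [cF, Walk.darts_cons, List.filter_cons]
  by_cases hf : s(a,b) ∈ F <;> simp [hf, Dart.edge, add_comm]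

lemma phiW_nil {a y : V} : phiW F (Walk.nil : G.Walk a a) y = 0 := rfl

lemma phiW_cons {a b c : V} (h : G.Adj a b) (W : G.Walk b c) (y : V) :
    phiW F (Walk.cons h W) y =
      (if s(a, b) ∈ F then ((G.dist a y : ℤ) - G.dist b y) else 0) + phiW F W y := by
  simp [phiW, Walk.darts_cons, Dart.edge]
  congr

end Aux

section Aux2

open SimpleGraph Walk
open scoped Classical

variable {G : SimpleGraph V} {F : Set (Sym2 V)}

lemma theta_of_ne {a b p q : V} (hab : s(a,b) ∈ G.edgeSet) (hpq : s(p,q) ∈ G.edgeSet)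
    (h : (G.dist a p : ℤ) - G.dist b p ≠ (G.dist a q : ℤ) - G.dist b q) :
    Theta G s(a,b) s(p,q) := by
  refine ⟨hab, hpq, a, b, p, q, rfl, rfl, ?_⟩
  have hc : G.dist p b = G.dist b p := SimpleGraph.dist_comm
  omega

/-- the jump lemma: distance differences w.r.t. the endpoints of an `F`-edge do not change
across edges that are not in `F` (where `F` is closed under `Θ`). -/
lemma jump (hFE : F ⊆ G.edgeSet) (hcl : ∀ e ∈ F, ∀ f, Theta G e f → f ∈ F)
    {a b p q : V} (he : s(a,b) ∈ F) (hpq : G.Adj p q) (hf : s(p,q) ∉ F) :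
    (G.dist a p : ℤ) - G.dist b p = (G.dist a q : ℤ) - G.dist b q := by
  by_contra h
  exact hf (hcl _ he _ (theta_of_ne (hFE he) (G.mem_edgeSet.mpr hpq) h))

lemma dist_adj_le (hG : G.Connected) {p q : V} (h : G.Adj p q) (y : V) :
    G.dist y p ≤ G.dist y q + 1 := by
  have h1 := hG.dist_triangle (u := y) (v := q) (w := p)
  have h2 : G.dist q p = 1 := SimpleGraph.dist_eq_one_iff_adj.mpr h.symm
  omega

/-- on a shortest walk, each dart decreases distance to the end. -/
lemma shortest_dart_right (hG : G.Connected) :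
    ∀ {w x : V} (P : G.Walk w x), P.length = G.dist w x →
      ∀ d ∈ P.darts, G.dist d.fst x = G.dist d.snd x + 1 := by
  intro w x P
  induction P with
  | nil => intro _ d hd; simp at hd
  | @cons w w₁ x h P' ih =>
    intro hlen d hd
    have hd1 : G.dist w₁ x ≤ P'.length := SimpleGraph.dist_le P'
    have hd2 : G.dist w x ≤ G.dist w₁ x + 1 := by
      have := hG.dist_triangle (u := w) (v := w₁) (w := x)
      have h2 : G.dist w w₁ = 1 := SimpleGraph.dist_eq_one_iff_adj.mpr h
      omega
    have hlen' : P'.length = G.dist w₁ x := by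
      simp only [Walk.length_cons] at hlen; omega
    rw [Walk.darts_cons, List.mem_cons] at hd
    rcases hd with rfl | hd
    · simp only [Walk.length_cons] at hlen
      show G.dist w x = G.dist w₁ x + 1
      omega
    · exact ih hlen' d hd

/-- every vertex of a shortest walk lies metrically between the endpoints. -/
lemma shortest_support (hG : G.Connected) :
    ∀ {w x : V} (P : G.Walk w x), P.length = G.dist w x →
      ∀ a ∈ P.support, G.dist w a + G.dist a x = G.dist w x := by
  intro w x P
  induction P with
  | nil =>
    intro _ a ha
    simp only [Walk.support_nil, List.mem_cons, List.not_mem_nil, or_false] at ha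
    subst ha; simp
  | @cons w w₁ x h P' ih =>
    intro hlen a ha
    have hd1 : G.dist w₁ x ≤ P'.length := SimpleGraph.dist_le P'
    have hww₁ : G.dist w w₁ = 1 := SimpleGraph.dist_eq_one_iff_adj.mpr h
    have hd2 : G.dist w x ≤ G.dist w₁ x + 1 := by
      have := hG.dist_triangle (u := w) (v := w₁) (w := x); omega
    have hlen' : P'.length = G.dist w₁ x := by
      simp only [Walk.length_cons] at hlen; omega
    rw [Walk.support_cons, List.mem_cons] at ha
    rcases ha with rfl | ha
    · simp
    · have hih := ih hlen' a ha
      have h3 : G.dist w a ≤ G.dist w₁ a + 1 := by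
        have := hG.dist_triangle (u := w) (v := w₁) (w := a); omega
      have h4 : G.dist w x ≤ G.dist w a + G.dist a x :=
        hG.dist_triangle (u := w) (v := a) (w := x)
      simp only [Walk.length_cons] at hlen
      omega

lemma shortest_dart_left (hG : G.Connected) {w x : V} (P : G.Walk w x)
    (hP : P.length = G.dist w x) {d : G.Dart} (hd : d ∈ P.darts) :
    G.dist w d.snd = G.dist w d.fst + 1 := by
  have h1 := shortest_support hG P hP d.fst (Walk.dart_fst_mem_support_of_mem_darts _ hd)
  have h2 := shortest_support hG P hP d.snd (Walk.dart_snd_mem_support_of_mem_darts _ hd)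
  have h3 := shortest_dart_right hG P hP d hd
  omega

end Aux2

section Aux3

open SimpleGraph Walk
open scoped Classical

variable {G : SimpleGraph V} {F : Set (Sym2 V)}

lemma list_ite_sum {α : Type*} (p : α → Prop) [DecidablePred p] (c : ℤ) :
    ∀ l : List α,
      (l.map (fun a => if p a then c else 0)).sum = c * ((l.filter (fun a => decide (p a))).length : ℤ)
  | [] => by simp
  | (a :: l) => by
    rw [List.map_cons, List.sum_cons, List.filter_cons, list_ite_sum p c l]
    by_cases hf : p a <;> simp [hf] <;> push_cast <;> ring

/-- value of the potential of a shortest walk at its endpoint. -/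
lemma phiW_end (hG : G.Connected) {w x : V} (P : G.Walk w x) (hP : P.length = G.dist w x) :
    phiW F P x = (cF F P : ℤ) := by
  have key : ∀ d ∈ P.darts,
      (if d.edge ∈ F then ((G.dist d.fst x : ℤ) - G.dist d.snd x) else 0)
        = (if d.edge ∈ F then (1 : ℤ) else 0) := by
    intro d hd
    have h1 := shortest_dart_right hG P hP d hd
    by_cases hf : d.edge ∈ F <;> simp [hf]
    omega
  have h2 : phiW F P x = ((P.darts.map (fun d => if d.edge ∈ F then (1 : ℤ) else 0)).sum) :=
    congrArg List.sum (List.map_congr_left key)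
  rw [h2, list_ite_sum]
  unfold cF
  simp

/-- value of the potential of a shortest walk at its start. -/
lemma phiW_start (hG : G.Connected) {w x : V} (P : G.Walk w x) (hP : P.length = G.dist w x) :
    phiW F P w = -(cF F P : ℤ) := by
  have key : ∀ d ∈ P.darts,
      (if d.edge ∈ F then ((G.dist d.fst w : ℤ) - G.dist d.snd w) else 0)
        = (if d.edge ∈ F then (-1 : ℤ) else 0) := by
    intro d hd
    have h1 := shortest_dart_left hG P hP hd
    have c1 : G.dist d.fst w = G.dist w d.fst := SimpleGraph.dist_comm
    have c2 : G.dist d.snd w = G.dist w d.snd := SimpleGraph.dist_comm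
    by_cases hf : d.edge ∈ F <;> simp [hf]
    omega
  have h2 : phiW F P w = ((P.darts.map (fun d => if d.edge ∈ F then (-1 : ℤ) else 0)).sum) :=
    congrArg List.sum (List.map_congr_left key)
  rw [h2, list_ite_sum]
  unfold cF
  simp

end Aux3

section Aux4

open SimpleGraph Walk
open scoped Classical

variable {G : SimpleGraph V} {F : Set (Sym2 V)}

/-- the potential does not change across non-`F` edges. -/
lemma phiW_nonF (hFE : F ⊆ G.edgeSet) (hcl : ∀ e ∈ F, ∀ f, Theta G e f → f ∈ F)
    {p q : V} (hpq : G.Adj p q) (hf : s(p,q) ∉ F) {a b : V} (W : G.Walk a b) :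
    phiW F W p = phiW F W q := by
  have key : ∀ d ∈ W.darts,
      (if d.edge ∈ F then ((G.dist d.fst p : ℤ) - G.dist d.snd p) else 0)
        = (if d.edge ∈ F then ((G.dist d.fst q : ℤ) - G.dist d.snd q) else 0) := by
    intro d _
    by_cases he : d.edge ∈ F <;> simp [he]
    have he' : s(d.fst, d.snd) ∈ F := he
    exact jump hFE hcl he' hpq hf
  exact congrArg List.sum (List.map_congr_left key)

/-- change of the potential across an `F`-edge. -/
lemma phiW_F (hFE : F ⊆ G.edgeSet) (hcl : ∀ e ∈ F, ∀ f, Theta G e f → f ∈ F)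
    {p q : V} (hpq : G.Adj p q) (hf : s(p,q) ∈ F) {a b : V} (W : G.Walk a b) :
    phiW F W q - phiW F W p =
      ((G.dist a q : ℤ) - G.dist b q) - ((G.dist a p : ℤ) - G.dist b p) := by
  induction W with
  | nil => simp [phiW_nil]
  | @cons w w₁ c h W' ih =>
    rw [phiW_cons, phiW_cons]
    have hstep : (if s(w, w₁) ∈ F then ((G.dist w q : ℤ) - G.dist w₁ q) else 0)
        - (if s(w, w₁) ∈ F then ((G.dist w p : ℤ) - G.dist w₁ p) else 0)
        = ((G.dist w q : ℤ) - G.dist w₁ q) - ((G.dist w p : ℤ) - G.dist w₁ p) := by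
      by_cases he : s(w, w₁) ∈ F
      · simp [he]
      · have hj := jump hFE hcl hf h he
        have c1 : G.dist p w = G.dist w p := SimpleGraph.dist_comm
        have c2 : G.dist q w = G.dist w q := SimpleGraph.dist_comm
        have c3 : G.dist p w₁ = G.dist w₁ p := SimpleGraph.dist_comm
        have c4 : G.dist q w₁ = G.dist w₁ q := SimpleGraph.dist_comm
        simp only [he, if_false]
        omega
    omega

/-- the key inequality: the potential of a (shortest) walk changes by at most `2·cF`
along any other walk. -/
lemma phiW_bound (hG : G.Connected) (hFE : F ⊆ G.edgeSet)
    (hcl : ∀ e ∈ F, ∀ f, Theta G e f → f ∈ F) {a b : V} (P : G.Walk a b) :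
    ∀ {z y : V} (W : G.Walk z y), phiW F P y - phiW F P z ≤ 2 * (cF F W : ℤ) := by
  intro z y W
  induction W with
  | nil => simp
  | @cons z z₁ y h W' ih =>
    rw [cF_cons]
    by_cases he : s(z, z₁) ∈ F
    · have hstep := phiW_F hFE hcl h he P
      have b1 : G.dist a z₁ ≤ G.dist a z + 1 := dist_adj_le hG h.symm a
      have b2 : G.dist b z ≤ G.dist b z₁ + 1 := dist_adj_le hG h b
      simp only [he, if_true]
      push_cast
      omega
    · have hstep := phiW_nonF hFE hcl h he P
      simp only [he, if_false]
      omega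

end Aux4

section Aux5

open SimpleGraph Walk
open scoped Classical

variable {G : SimpleGraph V} {F : Set (Sym2 V)}

lemma cF_append {a b c : V} (W₁ : G.Walk a b) (W₂ : G.Walk b c) :
    cF F (W₁.append W₂) = cF F W₁ + cF F W₂ := by
  unfold cF
  rw [Walk.darts_append, List.filter_append, List.length_append]

lemma proj_eq_of_adj_nonF {z z₁ : V} (h : G.Adj z z₁) (hf : s(z, z₁) ∉ F) :
    proj G F z = proj G F z₁ :=
  ConnectedComponent.sound (SimpleGraph.Adj.reachable (by simp [SimpleGraph.deleteEdges_adj, h, hf]))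

/-- projecting a walk to the quotient graph. -/
lemma project_walk : ∀ {z y : V} (W : G.Walk z y),
    ∃ Wq : (quotGraph G F).Walk (proj G F z) (proj G F y), Wq.length ≤ cF F W := by
  intro z y W
  induction W with
  | nil => exact ⟨Walk.nil, by simp⟩
  | @cons z z₁ y h W' ih =>
    obtain ⟨Wq', hWq'⟩ := ih
    rw [cF_cons]
    by_cases he : s(z, z₁) ∈ F
    · by_cases hzz : proj G F z = proj G F z₁
      · exact ⟨Wq'.copy hzz.symm rfl, by simp only [Walk.length_copy, if_pos he]; omega⟩
      · refine ⟨Walk.cons (?_ : (quotGraph G F).Adj _ _) Wq', ?_⟩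
        · exact ⟨hzz, z, z₁, h, rfl, rfl⟩
        · show Wq'.length + 1 ≤ _; simp only [if_pos he]; omega
    · exact ⟨Wq'.copy (proj_eq_of_adj_nonF h he).symm rfl,
        by simp only [Walk.length_copy, if_neg he]; omega⟩

/-- transferring a walk of `G \ F` into `G`; it has no `F`-edges. -/
lemma transfer_walk : ∀ {a b : V} (W₀ : (G.deleteEdges F).Walk a b),
    ∃ W : G.Walk a b, cF F W = 0 := by
  intro a b W₀
  induction W₀ with
  | nil => exact ⟨Walk.nil, rfl⟩
  | @cons a a₁ b h W' ih =>
    obtain ⟨W, hW⟩ := ih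
    rw [SimpleGraph.deleteEdges_adj] at h
    exact ⟨Walk.cons h.1 W, by rw [cF_cons, hW]; simp [h.2]⟩

/-- lifting a quotient walk. -/
lemma lift_walk : ∀ {X Y : Comp G F} (Wq : (quotGraph G F).Walk X Y) {a b : V},
    proj G F a = X → proj G F b = Y → ∃ W : G.Walk a b, cF F W ≤ Wq.length := by
  intro X Y Wq
  induction Wq with
  | nil =>
    intro a b ha hb
    have : (G.deleteEdges F).Reachable a b := ConnectedComponent.exact (ha.trans hb.symm)
    obtain ⟨W₀⟩ := this
    obtain ⟨W, hW⟩ := transfer_walk W₀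
    exact ⟨W, by omega⟩
  | @cons X Z Y hXZ Wq' ih =>
    intro a b ha hb
    obtain ⟨-, x₁, y₁, hadj, hx, hy⟩ := hXZ
    have h1 : (G.deleteEdges F).Reachable a x₁ := ConnectedComponent.exact (ha.trans hx.symm)
    obtain ⟨W₀⟩ := h1
    obtain ⟨W₁, hW₁⟩ := transfer_walk W₀
    obtain ⟨W₂, hW₂⟩ := ih hy hb
    refine ⟨W₁.append (Walk.cons hadj W₂), ?_⟩
    rw [cF_append, cF_cons, hW₁]
    show _ ≤ Wq'.length + 1
    by_cases he : s(x₁, y₁) ∈ F <;> simp [he] <;> omega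

/-- the quotient distance equals the number of `F`-edges on any shortest path. -/
lemma qdist_eq_cF (hG : G.Connected) (hFE : F ⊆ G.edgeSet)
    (hcl : ∀ e ∈ F, ∀ f, Theta G e f → f ∈ F) {a x : V} (P : G.Walk a x)
    (hP : P.length = G.dist a x) :
    (quotGraph G F).dist (proj G F a) (proj G F x) = cF F P := by
  obtain ⟨Wq, hWq⟩ := project_walk (F := F) P
  have hle : (quotGraph G F).dist (proj G F a) (proj G F x) ≤ cF F P :=
    le_trans (SimpleGraph.dist_le Wq) hWq
  have hreach : (quotGraph G F).Reachable (proj G F a) (proj G F x) := Wq.reachable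
  obtain ⟨Wq', hWq'⟩ := hreach.exists_walk_length_eq_dist
  obtain ⟨W, hW⟩ := lift_walk Wq' rfl rfl
  have h1 : phiW F P x - phiW F P a ≤ 2 * (cF F W : ℤ) := phiW_bound hG hFE hcl P W
  rw [phiW_end hG P hP, phiW_start hG P hP] at h1
  omega

end Aux5

section Aux6

open SimpleGraph Walk
open scoped Classical

variable {G : SimpleGraph V} {F : Set (Sym2 V)}

/-- The main distance lemma: for an `F`-edge `ab`, quotient-distance differences to any
vertex agree with distance differences in `G`. -/
lemma main_dist (hG : G.Connected) (hFE : F ⊆ G.edgeSet)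
    (hcl : ∀ e ∈ F, ∀ f, Theta G e f → f ∈ F) {a b : V} (hab : s(a,b) ∈ F) (x : V) :
    ((quotGraph G F).dist (proj G F a) (proj G F x) : ℤ)
      - (quotGraph G F).dist (proj G F b) (proj G F x)
    = (G.dist a x : ℤ) - G.dist b x := by
  have hGab : G.Adj a b := G.mem_edgeSet.mp (hFE hab)
  have hba : s(b,a) ∈ F := by rwa [Sym2.eq_swap]
  obtain ⟨Pa, hPa⟩ := hG.exists_walk_length_eq_dist a x
  obtain ⟨Pb, hPb⟩ := hG.exists_walk_length_eq_dist b x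
  have ra := qdist_eq_cF hG hFE hcl Pa hPa
  have rb := qdist_eq_cF hG hFE hcl Pb hPb
  have c1 : G.dist x a = G.dist a x := SimpleGraph.dist_comm
  have c2 : G.dist x b = G.dist b x := SimpleGraph.dist_comm
  have t1 : G.dist x a ≤ G.dist x b + 1 := dist_adj_le hG hGab x
  have t2 : G.dist x b ≤ G.dist x a + 1 := dist_adj_le hG hGab.symm x
  rcases Nat.lt_trichotomy (G.dist a x) (G.dist b x) with hlt | heq | hgt
  · -- dist b x = dist a x + 1 : prepend the edge to Pa
    have hb' : (Walk.cons hGab.symm Pa).length = G.dist b x := by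
      simp only [Walk.length_cons]; omega
    have rb' := qdist_eq_cF hG hFE hcl (Walk.cons hGab.symm Pa) hb'
    rw [cF_cons, if_pos hba] at rb'
    rw [ra, rb']
    push_cast; omega
  · -- equal distances: both inequalities via the potential
    have key : ∀ {p q : V} (hpq : G.Adj p q) (hf : s(p,q) ∈ F)
        (Pp : G.Walk p x) (hPp : Pp.length = G.dist p x)
        (Pq : G.Walk q x) (hPq : Pq.length = G.dist q x),
        G.dist p x = G.dist q x → cF F Pp ≤ cF F Pq := by
      intro p q hpq hf Pp hPp Pq hPq hd
      have hb1 : phiW F Pp x - phiW F Pp q ≤ 2 * (cF F Pq : ℤ) := phiW_bound hG hFE hcl Pp Pq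
      have h2 : phiW F Pp q - phiW F Pp p
          = ((G.dist p q : ℤ) - G.dist x q) - ((G.dist p p : ℤ) - G.dist x p) :=
        phiW_F hFE hcl hpq hf Pp
      have h3 : phiW F Pp p = -(cF F Pp : ℤ) := phiW_start hG Pp hPp
      have h4 : phiW F Pp x = (cF F Pp : ℤ) := phiW_end hG Pp hPp
      have h5 : G.dist p q = 1 := SimpleGraph.dist_eq_one_iff_adj.mpr hpq
      have h6 : G.dist p p = 0 := SimpleGraph.dist_self
      have c3 : G.dist x q = G.dist q x := SimpleGraph.dist_comm
      have c4 : G.dist x p = G.dist p x := SimpleGraph.dist_comm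
      omega
    have e1 : cF F Pa ≤ cF F Pb := key hGab hab Pa hPa Pb hPb heq
    have e2 : cF F Pb ≤ cF F Pa := key hGab.symm hba Pb hPb Pa hPa heq.symm
    rw [ra, rb]
    omega
  · have ha' : (Walk.cons hGab Pb).length = G.dist a x := by
      simp only [Walk.length_cons]; omega
    have ra' := qdist_eq_cF hG hFE hcl (Walk.cons hGab Pb) ha'
    rw [cF_cons, if_pos hab] at ra'
    rw [rb, ra']
    push_cast; omega

/-- `F`-edges cross between distinct components. -/
lemma proj_ne (hG : G.Connected) (hFE : F ⊆ G.edgeSet)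
    (hcl : ∀ e ∈ F, ∀ f, Theta G e f → f ∈ F) {a b : V} (hab : s(a,b) ∈ F) :
    proj G F a ≠ proj G F b := by
  have h := main_dist hG hFE hcl hab a
  have hGab : G.Adj a b := G.mem_edgeSet.mp (hFE hab)
  have h5 : G.dist b a = 1 := SimpleGraph.dist_eq_one_iff_adj.mpr hGab.symm
  have h6 : G.dist a a = 0 := SimpleGraph.dist_self
  intro hEq
  rw [hEq] at h
  simp only [SimpleGraph.dist_self, h5, h6] at h
  omega

lemma quot_adj (hG : G.Connected) (hFE : F ⊆ G.edgeSet)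
    (hcl : ∀ e ∈ F, ∀ f, Theta G e f → f ∈ F) {a b : V} (hab : s(a,b) ∈ F) :
    (quotGraph G F).Adj (proj G F a) (proj G F b) :=
  ⟨proj_ne hG hFE hcl hab, a, b, G.mem_edgeSet.mp (hFE hab), rfl, rfl⟩

end Aux6

section Aux7

open SimpleGraph Walk
open scoped Classical

variable {G : SimpleGraph V} {F : Set (Sym2 V)}

lemma eDist_mk (u p q : V) : eDist G u s(p,q) = min (G.dist u p) (G.dist u q) := rfl

/-- vertex equivalence -/
lemma equiv_vertex (hG : G.Connected) (hFE : F ⊆ G.edgeSet)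
    (hcl : ∀ e ∈ F, ∀ f, Theta G e f → f ∈ F) {u v : V} (he : s(u,v) ∈ F) (x : V) :
    G.dist u x = G.dist v x ↔
      (quotGraph G F).dist (proj G F u) (proj G F x)
        = (quotGraph G F).dist (proj G F v) (proj G F x) := by
  have h := main_dist hG hFE hcl he x
  omega

/-- internal edge equivalence -/
lemma equiv_int_edge (hG : G.Connected) (hFE : F ⊆ G.edgeSet)
    (hcl : ∀ e ∈ F, ∀ f, Theta G e f → f ∈ F) {u v : V} (he : s(u,v) ∈ F)
    {p q : V} (hpq : G.Adj p q) (hf : s(p,q) ∉ F) :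
    (eDist G u s(p,q) = eDist G v s(p,q)) ↔ G.dist u p = G.dist v p := by
  have hj := jump hFE hcl he hpq hf
  rw [eDist_mk, eDist_mk]
  omega

/-- cut edge equivalence -/
lemma equiv_cut_edge (hG : G.Connected) (hFE : F ⊆ G.edgeSet)
    (hcl : ∀ e ∈ F, ∀ f, Theta G e f → f ∈ F) {u v : V} (he : s(u,v) ∈ F)
    {p q : V} (hf : s(p,q) ∈ F) :
    (eDist G u s(p,q) = eDist G v s(p,q)) ↔
      (eDist (quotGraph G F) (proj G F u) s(proj G F p, proj G F q)
        = eDist (quotGraph G F) (proj G F v) s(proj G F p, proj G F q)) := by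
  have h1 := main_dist hG hFE hcl he p
  have h2 := main_dist hG hFE hcl he q
  have h3 := main_dist hG hFE hcl hf u
  have h4 := main_dist hG hFE hcl hf v
  have cqu : ∀ Y : Comp G F, (quotGraph G F).dist Y (proj G F u)
      = (quotGraph G F).dist (proj G F u) Y := fun Y => SimpleGraph.dist_comm
  have cqv : ∀ Y : Comp G F, (quotGraph G F).dist Y (proj G F v)
      = (quotGraph G F).dist (proj G F v) Y := fun Y => SimpleGraph.dist_comm
  rw [cqu, cqu] at h3
  rw [cqv, cqv] at h4
  have cpu : G.dist p u = G.dist u p := SimpleGraph.dist_comm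
  have cqu' : G.dist q u = G.dist u q := SimpleGraph.dist_comm
  have cpv : G.dist p v = G.dist v p := SimpleGraph.dist_comm
  have cqv' : G.dist q v = G.dist v q := SimpleGraph.dist_comm
  rw [eDist_mk, eDist_mk, eDist_mk, eDist_mk]
  omega
  
end Aux7

section Aux8

open SimpleGraph Walk
open scoped Classical

variable {G : SimpleGraph V} {F : Set (Sym2 V)}

lemma N0_eq_biUnion (hG : G.Connected) (hFE : F ⊆ G.edgeSet)
    (hcl : ∀ e ∈ F, ∀ f, Theta G e f → f ∈ F) {u v : V} (he : s(u,v) ∈ F) :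
    N0set G u v =
      ⋃ X ∈ N0set (quotGraph G F) (proj G F u) (proj G F v), X.supp := by
  ext x
  simp only [Set.mem_iUnion, exists_prop]
  constructor
  · intro hx
    exact ⟨proj G F x, (equiv_vertex hG hFE hcl he x).mp hx,
      (ConnectedComponent.mem_supp_iff _ _).mpr rfl⟩
  · rintro ⟨X, hX, hsupp⟩
    rw [ConnectedComponent.mem_supp_iff] at hsupp
    have hxX : proj G F x = X := hsupp
    exact (equiv_vertex hG hFE hcl he x).mpr (by rw [hxX]; exact hX)

lemma M0_diff_eq_biUnion (hG : G.Connected) (hFE : F ⊆ G.edgeSet)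
    (hcl : ∀ e ∈ F, ∀ f, Theta G e f → f ∈ F) {u v : V} (he : s(u,v) ∈ F) :
    M0set G u v \ F =
      ⋃ X ∈ N0set (quotGraph G F) (proj G F u) (proj G F v), compEdges G F X := by
  ext f
  induction f using Sym2.ind with
  | _ p q =>
    simp only [Set.mem_iUnion, exists_prop, Set.mem_diff]
    constructor
    · rintro ⟨⟨hfE, hdist⟩, hnF⟩
      have hadj : G.Adj p q := G.mem_edgeSet.mp hfE
      have hint := (equiv_int_edge hG hFE hcl he hadj hnF).mp hdist
      refine ⟨proj G F p, (equiv_vertex hG hFE hcl he p).mp hint, ?_, ?_⟩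
      · rw [SimpleGraph.edgeSet_deleteEdges]
        exact ⟨hfE, hnF⟩
      · intro x hx
        rw [Sym2.mem_iff] at hx
        rcases hx with rfl | rfl
        · exact (ConnectedComponent.mem_supp_iff _ _).mpr rfl
        · exact (ConnectedComponent.mem_supp_iff _ _).mpr (proj_eq_of_adj_nonF hadj hnF).symm
    · rintro ⟨X, hX, hfC, hall⟩
      rw [SimpleGraph.edgeSet_deleteEdges] at hfC
      obtain ⟨hfE, hnF⟩ := hfC
      have hadj : G.Adj p q := G.mem_edgeSet.mp hfE
      have hp : proj G F p = X :=
        (ConnectedComponent.mem_supp_iff _ _).mp (hall p (Sym2.mem_mk_left p q))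
      have hvert : G.dist u p = G.dist v p :=
        (equiv_vertex hG hFE hcl he p).mpr (by rw [hp]; exact hX)
      exact ⟨⟨hfE, (equiv_int_edge hG hFE hcl he hadj hnF).mpr hvert⟩, hnF⟩

lemma M0_inter_eq_biUnion (hG : G.Connected) (hFE : F ⊆ G.edgeSet)
    (hcl : ∀ e ∈ F, ∀ f, Theta G e f → f ∈ F) {u v : V} (he : s(u,v) ∈ F) :
    M0set G u v ∩ F =
      ⋃ Fq ∈ M0set (quotGraph G F) (proj G F u) (proj G F v), hatE G F Fq := by
  ext f
  induction f using Sym2.ind with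
  | _ p q =>
    simp only [Set.mem_iUnion, exists_prop, Set.mem_inter_iff]
    constructor
    · rintro ⟨⟨hfE, hdist⟩, hF⟩
      refine ⟨s(proj G F p, proj G F q),
        ⟨(quotGraph G F).mem_edgeSet.mpr (quot_adj hG hFE hcl hF),
          (equiv_cut_edge hG hFE hcl he hF).mp hdist⟩,
        hfE, Sym2.map_pair_eq _ _ _⟩
    · rintro ⟨Fq, ⟨hFqE, hFqdist⟩, hfE, hmap⟩
      rw [Sym2.map_pair_eq] at hmap
      subst hmap
      have hadj : G.Adj p q := G.mem_edgeSet.mp hfE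
      have hF : s(p, q) ∈ F := by
        by_contra hnF
        exact ((quotGraph G F).mem_edgeSet.mp hFqE).ne (proj_eq_of_adj_nonF hadj hnF)
      exact ⟨⟨hfE, (equiv_cut_edge hG hFE hcl he hF).mpr hFqdist⟩, hF⟩

end Aux8

theorem m0val_eq_quotient' {V : Type*} [Finite V] (G : SimpleGraph V) (hG : G.Connected)
    (sv : V → ℝ) (se : Sym2 V → ℝ)
    {k : ℕ} (P : Fin k → Set (Sym2 V)) (hP : IsCPartition G P)
    (i : Fin k) (u v : V) (he : s(u, v) ∈ P i) :
    m0val G sv se u v =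
      m0val (quotGraph G (P i)) (qsv G (P i) sv se) (qse G (P i) se)
        (proj G (P i) u) (proj G (P i) v) := by
  classical
  have hFE : P i ⊆ G.edgeSet := by
    intro e heF
    have : e ∈ ⋃ j, P j := Set.mem_iUnion.mpr ⟨i, heF⟩
    rwa [hP.1] at this
  have hcl : ∀ e ∈ P i, ∀ f, Theta G e f → f ∈ P i :=
    fun e heF f hT => hP.2.2 i e heF f (Relation.TransGen.single hT)
  set Q := quotGraph G (P i) with hQ
  set N0Q := N0set Q (proj G (P i) u) (proj G (P i) v) with hN0Q
  set M0Q := M0set Q (proj G (P i) u) (proj G (P i) v) with hM0Q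
  -- disjointness facts
  have hdisjN : N0Q.PairwiseDisjoint (fun X : Comp G (P i) => X.supp) := by
    intro X _ Y _ hne
    refine Set.disjoint_left.mpr (fun {x} hx hy => hne ?_)
    rw [ConnectedComponent.mem_supp_iff] at hx hy
    rw [← hx, ← hy]
  have hdisjC : N0Q.PairwiseDisjoint (fun X : Comp G (P i) => compEdges G (P i) X) := by
    intro X _ Y _ hne
    refine Set.disjoint_left.mpr (fun {f} hfX hfY => hne ?_)
    induction f using Sym2.ind with
    | _ p q =>
      have h1 := hfX.2 p (Sym2.mem_mk_left p q)
      have h2 := hfY.2 p (Sym2.mem_mk_left p q)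
      rw [ConnectedComponent.mem_supp_iff] at h1 h2
      rw [← h1, ← h2]
  have hdisjH : M0Q.PairwiseDisjoint (fun Fq : Sym2 (Comp G (P i)) => hatE G (P i) Fq) := by
    intro E1 _ E2 _ hne
    exact Set.disjoint_left.mpr (fun {f} hf1 hf2 => hne (hf1.2.symm.trans hf2.2))
  -- the three partition identities
  have s1 : (∑ᶠ x ∈ N0set G u v, sv x) = ∑ᶠ X ∈ N0Q, ∑ᶠ x ∈ X.supp, sv x := by
    rw [N0_eq_biUnion hG hFE hcl he]
    exact finsum_mem_biUnion hdisjN (Set.toFinite _) (fun X _ => Set.toFinite _)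
  have s2 : (∑ᶠ f ∈ M0set G u v \ P i, se f)
      = ∑ᶠ X ∈ N0Q, ∑ᶠ f ∈ compEdges G (P i) X, se f := by
    rw [M0_diff_eq_biUnion hG hFE hcl he]
    exact finsum_mem_biUnion hdisjC (Set.toFinite _) (fun X _ => Set.toFinite _)
  have s3 : (∑ᶠ f ∈ M0set G u v ∩ P i, se f)
      = ∑ᶠ Fq ∈ M0Q, ∑ᶠ f ∈ hatE G (P i) Fq, se f := by
    rw [M0_inter_eq_biUnion hG hFE hcl he]
    exact finsum_mem_biUnion hdisjH (Set.toFinite _) (fun X _ => Set.toFinite _)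
  have s4 : (∑ᶠ f ∈ M0set G u v, se f)
      = (∑ᶠ f ∈ M0set G u v \ P i, se f) + (∑ᶠ f ∈ M0set G u v ∩ P i, se f) := by
    conv_lhs => rw [← Set.diff_union_inter (M0set G u v) (P i)]
    refine finsum_mem_union ?_ (Set.toFinite _) (Set.toFinite _)
    exact Set.disjoint_left.mpr (fun {f} hf1 hf2 => hf1.2 hf2.2)
  have hA : (∑ᶠ X ∈ N0Q, qsv G (P i) sv se X)
      = (∑ᶠ X ∈ N0Q, ∑ᶠ f ∈ compEdges G (P i) X, se f)
        + (∑ᶠ X ∈ N0Q, ∑ᶠ x ∈ X.supp, sv x) := by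
    have := finsum_mem_add_distrib
      (f := fun X : Comp G (P i) => ∑ᶠ f ∈ compEdges G (P i) X, se f)
      (g := fun X : Comp G (P i) => ∑ᶠ x ∈ X.supp, sv x)
      (s := N0Q) (Set.toFinite _)
    exact this
  show vsum (N0set G u v) sv + vsum (M0set G u v) se
    = vsum N0Q (qsv G (P i) sv se) + vsum M0Q (qse G (P i) se)
  unfold vsum
  rw [s1, s4, s2, s3, hA]
  have hB : (∑ᶠ Fq ∈ M0Q, qse G (P i) se Fq)
      = ∑ᶠ Fq ∈ M0Q, ∑ᶠ f ∈ hatE G (P i) Fq, se f := rfl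
  rw [hB]
  ring


/-- For a connected strength-weighted graph, with `e = uv ∈ E_i`,
`U = ℓ_i(u)`, `V = ℓ_i(v)` and `E = UV` the corresponding edge of the strength-weighted
quotient graph `G_i = G_sw/E_i`: `m_0(e|G_sw) = m_0(E|G_i)`, i.e.
`Σ_{x ∈ N_0(e|G)} s_v(x) + Σ_{f ∈ M_0(e|G)} s_e(f)
  = Σ_{X ∈ N_0(E|G_i)} s_v^i(X) + Σ_{F ∈ M_0(E|G_i)} s_e^i(F)`. -/
theorem m0val_eq_quotient {V : Type*} [Finite V] (G : SimpleGraph V) (hG : G.Connected)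
    (wv sv : V → ℝ) (we se : Sym2 V → ℝ)
    (hwv : ∀ x, 0 ≤ wv x) (hsv : ∀ x, 0 ≤ sv x)
    (hwe : ∀ e, 0 ≤ we e) (hse : ∀ e, 0 ≤ se e)
    {k : ℕ} (P : Fin k → Set (Sym2 V)) (hP : IsCPartition G P)
    (i : Fin k) (u v : V) (he : s(u, v) ∈ P i) :
    m0val G sv se u v =
      m0val (quotGraph G (P i)) (qsv G (P i) sv se) (qse G (P i) se)
        (proj G (P i) u) (proj G (P i) v) := by
  exact m0val_eq_quotient' G hG sv se P hP i u v he

end SzegedCut
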